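/- arXiv:2501.14146 — 3 statements merged into one kernel-verified Lean document; each statement's English description precedes it below -/
import Mathlib

section
/- If 𝓛 u = 0 for a smooth function u, then 𝓛(|∇_x u|²) = 2|∇_v ∇_x u|² ≥ 0, so |∇_x u|² is a subsolution of the Kolmogorov equation. -/
noncomputable section

/-- Partial derivative in time of a curried function of `(t, x, v)`. -/
def Dt {n : ℕ} (u : ℝ → (Fin n → ℝ) → (Fin n → ℝ) → ℝ) :
    ℝ → (Fin n → ℝ) → (Fin n → ℝ) → ℝ :=
  fun t x v => deriv (fun s => u s x v) t

/-- Partial derivative in the `i`-th space variable. -/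
def Dx {n : ℕ} (i : Fin n) (u : ℝ → (Fin n → ℝ) → (Fin n → ℝ) → ℝ) :
    ℝ → (Fin n → ℝ) → (Fin n → ℝ) → ℝ :=
  fun t x v => deriv (fun s => u t (Function.update x i s) v) (x i)

/-- Partial derivative in the `i`-th velocity variable. -/
def Dv {n : ℕ} (i : Fin n) (u : ℝ → (Fin n → ℝ) → (Fin n → ℝ) → ℝ) :
    ℝ → (Fin n → ℝ) → (Fin n → ℝ) → ℝ :=
  fun t x v => deriv (fun s => u t x (Function.update v i s)) (v i)

/-- The Kolmogorov operator `𝓛 u = Δ_v u − ∂_t u − v·∇_x u`. -/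
def Kol {n : ℕ} (u : ℝ → (Fin n → ℝ) → (Fin n → ℝ) → ℝ) :
    ℝ → (Fin n → ℝ) → (Fin n → ℝ) → ℝ :=
  fun t x v => (∑ i, Dv i (Dv i u) t x v) - Dt u t x v - ∑ i, v i * Dx i u t x v

/-- Euclidean norm on `Fin n → ℝ`. -/
def euclNorm {n : ℕ} (x : Fin n → ℝ) : ℝ := Real.sqrt (∑ i, x i ^ 2)

/-- Euclidean dot product on `Fin n → ℝ`. -/
def edot {n : ℕ} (x y : Fin n → ℝ) : ℝ := ∑ i, x i * y i

/-- Points `(t, x, v)` of the Galilean group. -/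
abbrev Pt (n : ℕ) := ℝ × (Fin n → ℝ) × (Fin n → ℝ)

/-- Galilean composition `z₀ ∘ z = (t₀+t, x₀+x+t v₀, v₀+v)`. -/
def galMul {n : ℕ} (a b : Pt n) : Pt n :=
  (a.1 + b.1, a.2.1 + b.2.1 + b.1 • a.2.2, a.2.2 + b.2.2)

/-- Galilean inverse `z₀⁻¹ = (−t₀, −x₀+t₀v₀, −v₀)`. -/
def galInv {n : ℕ} (a : Pt n) : Pt n :=
  (-a.1, -a.2.1 + a.1 • a.2.2, -a.2.2)

/-- Kinetic scaling `S_r(t,x,v) = (r²t, r³x, rv)`. -/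
def galS {n : ℕ} (r : ℝ) (z : Pt n) : Pt n := (r ^ 2 * z.1, r ^ 3 • z.2.1, r • z.2.2)

/-- The kinetic cylinder of radius `r` centered at `z₀`. -/
def Qc {n : ℕ} (r : ℝ) (z₀ : Pt n) : Set (Pt n) :=
  {z | -r ^ 2 < z.1 - z₀.1 ∧ z.1 - z₀.1 ≤ 0 ∧
    euclNorm (z.2.1 - z₀.2.1 - (z.1 - z₀.1) • z₀.2.2) < r ^ 3 ∧
    euclNorm (z.2.2 - z₀.2.2) < r}


open ContinuousLinearMap in
/-- directional derivative -/
def pd {n : ℕ} (w : ℝ × (Fin n → ℝ) × (Fin n → ℝ)) (G : ℝ × (Fin n → ℝ) × (Fin n → ℝ) → ℝ) :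
    ℝ × (Fin n → ℝ) × (Fin n → ℝ) → ℝ :=
  fun z => fderiv ℝ G z w

theorem pd_contDiff {n : ℕ} {G : ℝ × (Fin n → ℝ) × (Fin n → ℝ) → ℝ}
    (hG : ContDiff ℝ (⊤ : ℕ∞) G) (w : ℝ × (Fin n → ℝ) × (Fin n → ℝ)) :
    ContDiff ℝ (⊤ : ℕ∞) (pd w G) :=
  (hG.fderiv_right (by simp)).clm_apply contDiff_const

theorem pd_comm {n : ℕ} {G : ℝ × (Fin n → ℝ) × (Fin n → ℝ) → ℝ}
    (hG : ContDiff ℝ (⊤ : ℕ∞) G) (a b : ℝ × (Fin n → ℝ) × (Fin n → ℝ)) :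
    pd a (pd b G) = pd b (pd a G) := by
  funext z
  have hd : DifferentiableAt ℝ (fderiv ℝ G) z :=
    ((hG.fderiv_right (m := (⊤ : ℕ∞)) (by simp)).differentiable (by simp)).differentiableAt
  have key : ∀ c d : ℝ × (Fin n → ℝ) × (Fin n → ℝ),
      pd c (pd d G) z = fderiv ℝ (fderiv ℝ G) z c d := by
    intro c d
    show fderiv ℝ (fun y => (fderiv ℝ G y) d) z c = _
    rw [fderiv_clm_apply hd (differentiableAt_const d)]
    simp
  rw [key, key, (hG.contDiffAt.isSymmSndFDerivAt (by rw [minSmoothness_of_isRCLikeNormedField]; exact WithTop.coe_le_coe.mpr (le_top : (2 : ℕ∞) ≤ ⊤))).eq]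


def et (n : ℕ) : Pt n := (1, 0, 0)
def ex {n : ℕ} (i : Fin n) : Pt n := (0, Pi.single i 1, 0)
def ev {n : ℕ} (i : Fin n) : Pt n := (0, 0, Pi.single i 1)

theorem Dt_eq {n : ℕ} {G : Pt n → ℝ} (hG : ContDiff ℝ (⊤ : ℕ∞) G) (t : ℝ) (x v : Fin n → ℝ) :
    Dt (fun t x v => G (t, x, v)) t x v = pd (et n) G (t, x, v) := by
  have h1 : HasDerivAt (fun s : ℝ => ((s, x, v) : Pt n)) (et n) t := by
    exact (hasDerivAt_id t).prodMk (hasDerivAt_const t (x, v))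
  exact ((hG.differentiable (by simp) (t, x, v)).hasFDerivAt.comp_hasDerivAt t h1).deriv

theorem Dx_eq {n : ℕ} {G : Pt n → ℝ} (hG : ContDiff ℝ (⊤ : ℕ∞) G) (i : Fin n) (t : ℝ) (x v : Fin n → ℝ) :
    Dx i (fun t x v => G (t, x, v)) t x v = pd (ex i) G (t, x, v) := by
  have h1 : HasDerivAt (fun s : ℝ => ((t, Function.update x i s, v) : Pt n)) (ex i) (x i) :=
    (hasDerivAt_const (x i) t).prodMk ((hasDerivAt_update x i (x i)).prodMk (hasDerivAt_const (x i) v))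
  have h2 := ((hG.differentiable (by simp) _).hasFDerivAt.comp_hasDerivAt (x i) h1).deriv
  rw [Function.update_eq_self] at h2
  exact h2

theorem Dv_eq {n : ℕ} {G : Pt n → ℝ} (hG : ContDiff ℝ (⊤ : ℕ∞) G) (i : Fin n) (t : ℝ) (x v : Fin n → ℝ) :
    Dv i (fun t x v => G (t, x, v)) t x v = pd (ev i) G (t, x, v) := by
  have h1 : HasDerivAt (fun s : ℝ => ((t, x, Function.update v i s) : Pt n)) (ev i) (v i) :=
    (hasDerivAt_const (v i) t).prodMk ((hasDerivAt_const (v i) x).prodMk (hasDerivAt_update v i (v i)))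
  have h2 := ((hG.differentiable (by simp) _).hasFDerivAt.comp_hasDerivAt (v i) h1).deriv
  rw [Function.update_eq_self] at h2
  exact h2

variable {n : ℕ}

theorem pd_sub {f g : Pt n → ℝ} (hf : DifferentiableAt ℝ f z) (hg : DifferentiableAt ℝ g z)
    (w : Pt n) : pd w (fun z => f z - g z) z = pd w f z - pd w g z := by
  unfold pd; rw [fderiv_fun_sub hf hg]; rfl

theorem pd_finset_sum {ι : Type*} {s : Finset ι} {f : ι → Pt n → ℝ} {z : Pt n}
    (hf : ∀ i ∈ s, DifferentiableAt ℝ (f i) z) (w : Pt n) :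
    pd w (fun z => ∑ i ∈ s, f i z) z = ∑ i ∈ s, pd w (f i) z := by
  unfold pd; rw [fderiv_fun_sum hf]; simp

theorem pd_mul {f g : Pt n → ℝ} {z : Pt n} (hf : DifferentiableAt ℝ f z)
    (hg : DifferentiableAt ℝ g z) (w : Pt n) :
    pd w (fun z => f z * g z) z = f z * pd w g z + g z * pd w f z := by
  unfold pd; rw [fderiv_fun_mul hf hg]; simp

theorem pd_sq {g : Pt n → ℝ} {z : Pt n} (hg : DifferentiableAt ℝ g z) (w : Pt n) :
    pd w (fun z => (g z) ^ 2) z = 2 * g z * pd w g z := by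
  have : (fun z => (g z) ^ 2) = fun z => g z * g z := by funext z; ring
  rw [this, pd_mul hg hg]; ring

theorem pd_const_mul {g : Pt n → ℝ} {z : Pt n} (hg : DifferentiableAt ℝ g z) (c : ℝ) (w : Pt n) :
    pd w (fun z => c * g z) z = c * pd w g z := by
  unfold pd; rw [fderiv_const_mul hg]; simp

theorem pd_zero_fun (w z : Pt n) : pd w (fun _ => (0 : ℝ)) z = 0 := by
  unfold pd; rw [fderiv_fun_const]; rfl

theorem pd_coordv (k : Fin n) (i : Fin n) (z : Pt n) :
    pd (ex i) (fun z : Pt n => z.2.2 k) z = 0 := by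
  unfold pd
  have : (fun z : Pt n => z.2.2 k) = (ContinuousLinearMap.proj (R := ℝ) (φ := fun _ : Fin n => ℝ) k).comp
      ((ContinuousLinearMap.snd ℝ (Fin n → ℝ) (Fin n → ℝ)).comp
        (ContinuousLinearMap.snd ℝ ℝ ((Fin n → ℝ) × (Fin n → ℝ)))) := rfl
  rw [this, ContinuousLinearMap.fderiv]
  simp [ex]


theorem Dv_funext {n : ℕ} {G : Pt n → ℝ} (hG : ContDiff ℝ (⊤ : ℕ∞) G) (j : Fin n) :
    Dv j (fun t x v => G (t, x, v)) = fun t x v => pd (ev j) G (t, x, v) := by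
  funext t x v; exact Dv_eq hG j t x v

theorem Kol_eq {n : ℕ} {G : Pt n → ℝ} (hG : ContDiff ℝ (⊤ : ℕ∞) G) (t : ℝ) (x v : Fin n → ℝ) :
    Kol (fun t x v => G (t, x, v)) t x v =
      (∑ j, pd (ev j) (pd (ev j) G) (t, x, v)) - pd (et n) G (t, x, v)
        - ∑ k, v k * pd (ex k) G (t, x, v) := by
  simp only [Kol]
  rw [Dt_eq hG]
  have h1 : ∀ j : Fin n, Dv j (Dv j (fun t x v => G (t, x, v))) t x v
      = pd (ev j) (pd (ev j) G) (t, x, v) := by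
    intro j
    rw [Dv_funext hG j, Dv_eq (pd_contDiff hG (ev j)) j]
  have h2 : ∀ k : Fin n, Dx k (fun t x v => G (t, x, v)) t x v = pd (ex k) G (t, x, v) :=
    fun k => Dx_eq hG k t x v
  simp only [h1, h2]

theorem alg_lemma {ι : Type*} (s : Finset ι) (P h Xv : ι → ℝ) (g T : ℝ)
    (key : (∑ j ∈ s, P j) - T - (∑ k ∈ s, Xv k) = 0) :
    (∑ j ∈ s, (2 * g * P j + 2 * (h j) ^ 2)) - 2 * g * T - ∑ k ∈ s, (2 * g * Xv k) =
      2 * ∑ j ∈ s, (h j) ^ 2 := by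
  simp only [Finset.sum_add_distrib, ← Finset.mul_sum]
  linear_combination 2 * g * key


def coordv {n : ℕ} (k : Fin n) : Pt n →L[ℝ] ℝ :=
  (ContinuousLinearMap.proj (R := ℝ) (φ := fun _ : Fin n => ℝ) k).comp
    ((ContinuousLinearMap.snd ℝ (Fin n → ℝ) (Fin n → ℝ)).comp
      (ContinuousLinearMap.snd ℝ ℝ ((Fin n → ℝ) × (Fin n → ℝ))))

theorem coordv_contDiff {n : ℕ} (k : Fin n) : ContDiff ℝ (⊤ : ℕ∞) (fun z : Pt n => z.2.2 k) :=
  (coordv k).contDiff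


/-- If `𝓛 u = 0` then `𝓛(|∇_x u|²) = 2|∇_v ∇_x u|² ≥ 0`: `|∇_x u|²` is a subsolution. -/
theorem Kol_gradx_sq_subsolution (n : ℕ)
    (u : ℝ → (Fin n → ℝ) → (Fin n → ℝ) → ℝ)
    (hu : ContDiff ℝ (⊤ : ℕ∞) (fun z : Pt n => u z.1 z.2.1 z.2.2))
    (hL : ∀ (t : ℝ) (x v : Fin n → ℝ), Kol u t x v = 0) :
    ∀ (t : ℝ) (x v : Fin n → ℝ),
      Kol (fun t x v => ∑ i, (Dx i u t x v) ^ 2) t x v =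
        2 * ∑ i, ∑ j, (Dv j (Dx i u) t x v) ^ 2 ∧
      0 ≤ Kol (fun t x v => ∑ i, (Dx i u t x v) ^ 2) t x v := by
  have hF : ContDiff ℝ (⊤ : ℕ∞) (fun z : Pt n => u z.1 z.2.1 z.2.2) := hu
  set F : Pt n → ℝ := fun z => u z.1 z.2.1 z.2.2 with hFdef
  set g : Fin n → Pt n → ℝ := fun i => pd (ex i) F with hgdef
  have hg : ∀ i, ContDiff ℝ (⊤ : ℕ∞) (g i) := fun i => pd_contDiff hF (ex i)
  set h : Fin n → Fin n → Pt n → ℝ := fun i j => pd (ev j) (g i) with hhdef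
  have hh : ∀ i j, ContDiff ℝ (⊤ : ℕ∞) (h i j) := fun i j => pd_contDiff (hg i) (ev j)
  have hDx : ∀ i, Dx i u = fun t x v => g i (t, x, v) := by
    intro i; funext t x v; exact Dx_eq hF i t x v
  have hDvDx : ∀ (i j : Fin n) t x v, Dv j (Dx i u) t x v = h i j (t, x, v) := by
    intro i j t x v
    rw [hDx i]
    exact Dv_eq (hg i) j t x v
  set W : Pt n → ℝ := fun z => ∑ i, (g i z) ^ 2 with hWdef
  have hW : ContDiff ℝ (⊤ : ℕ∞) W := ContDiff.sum fun i _ => (hg i).pow 2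
  have hwcurry : (fun t x v => ∑ i, (Dx i u t x v) ^ 2) =
      fun t x v => W (t, x, v) := by
    funext t x v
    exact Finset.sum_congr rfl fun i _ => by rw [hDx i]
  -- the equation satisfied by F
  have hzero : ∀ z : Pt n,
      (∑ j, pd (ev j) (pd (ev j) F) z) - pd (et n) F z - ∑ k, z.2.2 k * pd (ex k) F z = 0 := by
    intro z
    rw [← Kol_eq hF z.1 z.2.1 z.2.2]
    exact hL z.1 z.2.1 z.2.2
  -- the differentiated equation satisfied by each g i
  have hstep : ∀ (i : Fin n) (z : Pt n),
      (∑ j, pd (ev j) (pd (ev j) (g i)) z) - pd (et n) (g i) z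
        - ∑ k, z.2.2 k * pd (ex k) (g i) z = 0 := by
    intro i z
    have hA : ContDiff ℝ (⊤ : ℕ∞) (fun z : Pt n => ∑ j, pd (ev j) (pd (ev j) F) z) :=
      ContDiff.sum fun j _ => pd_contDiff (pd_contDiff hF (ev j)) (ev j)
    have hB : ContDiff ℝ (⊤ : ℕ∞) (pd (et n) F) := pd_contDiff hF (et n)
    have hC : ContDiff ℝ (⊤ : ℕ∞) (fun z : Pt n => ∑ k, z.2.2 k * pd (ex k) F z) :=
      ContDiff.sum fun k _ => (coordv_contDiff k).mul (pd_contDiff hF (ex k))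
    have hPhi : (fun z : Pt n =>
        (∑ j, pd (ev j) (pd (ev j) F) z) - pd (et n) F z
          - ∑ k, z.2.2 k * pd (ex k) F z) = fun _ => (0 : ℝ) := funext hzero
    have h0 : pd (ex i) (fun z : Pt n =>
        (∑ j, pd (ev j) (pd (ev j) F) z) - pd (et n) F z
          - ∑ k, z.2.2 k * pd (ex k) F z) z = 0 := by
      rw [hPhi, pd_zero_fun]
    have hsplit : pd (ex i) (fun z : Pt n =>
        (∑ j, pd (ev j) (pd (ev j) F) z) - pd (et n) F z
          - ∑ k, z.2.2 k * pd (ex k) F z) z =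
        pd (ex i) (fun z : Pt n => ∑ j, pd (ev j) (pd (ev j) F) z) z
          - pd (ex i) (pd (et n) F) z
          - pd (ex i) (fun z : Pt n => ∑ k, z.2.2 k * pd (ex k) F z) z := by
      rw [pd_sub ((hA.sub hB).differentiable (by simp) z) (hC.differentiable (by simp) z),
        pd_sub (hA.differentiable (by simp) z) (hB.differentiable (by simp) z)]
    have hAeq : pd (ex i) (fun z : Pt n => ∑ j, pd (ev j) (pd (ev j) F) z) z =
        ∑ j, pd (ev j) (pd (ev j) (g i)) z := by
      rw [pd_finset_sum (fun j _ =>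
        (pd_contDiff (pd_contDiff hF (ev j)) (ev j)).differentiable (by simp) z)]
      refine Finset.sum_congr rfl fun j _ => ?_
      rw [pd_comm (pd_contDiff hF (ev j)) (ex i) (ev j), pd_comm hF (ex i) (ev j)]
    have hBeq : pd (ex i) (pd (et n) F) z = pd (et n) (g i) z := by
      rw [pd_comm hF (ex i) (et n)]
    have hCeq : pd (ex i) (fun z : Pt n => ∑ k, z.2.2 k * pd (ex k) F z) z =
        ∑ k, z.2.2 k * pd (ex k) (g i) z := by
      rw [pd_finset_sum (fun k _ =>
        (((coordv_contDiff k).mul (pd_contDiff hF (ex k))).differentiable (by simp) z))]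
      refine Finset.sum_congr rfl fun k _ => ?_
      rw [pd_mul ((coordv_contDiff k).differentiable (by simp) z)
        ((pd_contDiff hF (ex k)).differentiable (by simp) z) (ex i),
        pd_coordv k i z, pd_comm hF (ex i) (ex k)]
      ring
    rw [hsplit, hAeq, hBeq, hCeq] at h0
    exact h0
  -- first derivatives of W
  have pdW : ∀ (w' : Pt n) (z : Pt n),
      pd w' W z = ∑ i, 2 * g i z * pd w' (g i) z := by
    intro w' z
    rw [hWdef, pd_finset_sum (fun i _ => (((hg i).pow 2).differentiable (by simp) z))]
    exact Finset.sum_congr rfl fun i _ => pd_sq ((hg i).differentiable (by simp) z) w'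
  -- second velocity derivatives of W
  have pdW2 : ∀ (j : Fin n) (z : Pt n),
      pd (ev j) (pd (ev j) W) z =
        ∑ i, (2 * g i z * pd (ev j) (pd (ev j) (g i)) z + 2 * (h i j z) ^ 2) := by
    intro j z
    have e1 : pd (ev j) W = fun z => ∑ i, 2 * g i z * h i j z := funext fun z => pdW (ev j) z
    rw [e1, pd_finset_sum (fun i _ =>
      ((contDiff_const.mul (hg i)).mul (hh i j)).differentiable (by simp) z)]
    refine Finset.sum_congr rfl fun i _ => ?_
    have e2 : (fun z => 2 * g i z * h i j z) = fun z => 2 * (g i z * h i j z) := by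
      funext z; ring
    rw [e2, pd_const_mul (((hg i).mul (hh i j)).differentiable (by simp) z),
      pd_mul ((hg i).differentiable (by simp) z) ((hh i j).differentiable (by simp) z)]
    show 2 * (g i z * pd (ev j) (pd (ev j) (g i)) z + h i j z * h i j z) = _
    ring
  intro t x v
  have heq : Kol (fun t x v => ∑ i, (Dx i u t x v) ^ 2) t x v =
      2 * ∑ i, ∑ j, (Dv j (Dx i u) t x v) ^ 2 := by
    rw [hwcurry, Kol_eq hW t x v]
    have e3 : (∑ j, pd (ev j) (pd (ev j) W) (t, x, v)) =
        ∑ i, ∑ j, (2 * g i (t, x, v) * pd (ev j) (pd (ev j) (g i)) (t, x, v)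
          + 2 * (h i j (t, x, v)) ^ 2) := by
      rw [Finset.sum_congr rfl fun j _ => pdW2 j (t, x, v)]
      exact Finset.sum_comm
    have e4 : (∑ k, v k * pd (ex k) W (t, x, v)) =
        ∑ i, ∑ k, 2 * g i (t, x, v) * (v k * pd (ex k) (g i) (t, x, v)) := by
      rw [Finset.sum_congr rfl fun k _ => by rw [pdW (ex k) (t, x, v), Finset.mul_sum]]
      rw [Finset.sum_comm]
      refine Finset.sum_congr rfl fun i _ => Finset.sum_congr rfl fun k _ => by ring
    rw [e3, e4, pdW (et n) (t, x, v), ← Finset.sum_sub_distrib, ← Finset.sum_sub_distrib]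
    simp only [hDvDx]
    have e5 : ∀ i : Fin n,
        (∑ j, (2 * g i (t, x, v) * pd (ev j) (pd (ev j) (g i)) (t, x, v)
            + 2 * (h i j (t, x, v)) ^ 2))
          - 2 * g i (t, x, v) * pd (et n) (g i) (t, x, v)
          - ∑ k, 2 * g i (t, x, v) * (v k * pd (ex k) (g i) (t, x, v)) =
        2 * ∑ j, (h i j (t, x, v)) ^ 2 := fun i =>
      alg_lemma Finset.univ _ _ _ _ _ (hstep i (t, x, v))
    rw [Finset.sum_congr rfl fun i _ => e5 i, ← Finset.mul_sum]
  exact ⟨heq, heq ▸ by positivity⟩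
end
end

section
/- If u is smooth and satisfies 𝓛 u = β(u) + φ with β smooth and increasing (β′ ≥ 0), then 𝓛(|∇_x u|²) = 2(β′(u)|∇_x u|² + |∇_v∇_x u|² + ∇_x u · ∇_x φ). -/
noncomputable section

namespace KolAux

variable {n : ℕ}

def Dd (a : Pt n) (G : Pt n → ℝ) (z : Pt n) : ℝ := fderiv ℝ G z a

def et (n : ℕ) : Pt n := (1, 0, 0)
def ex (i : Fin n) : Pt n := (0, Pi.single i 1, 0)
def ev (i : Fin n) : Pt n := (0, 0, Pi.single i 1)

lemma diffAt {G : Pt n → ℝ} (h : ContDiff ℝ (⊤ : ℕ∞) G) (z : Pt n) :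
    DifferentiableAt ℝ G z := (h.differentiable (by simp)).differentiableAt

lemma contDiff_Dd {G : Pt n → ℝ} (h : ContDiff ℝ (⊤ : ℕ∞) G) (a : Pt n) :
    ContDiff ℝ (⊤ : ℕ∞) (Dd a G) :=
  (h.fderiv_right (by simp)).clm_apply contDiff_const

lemma hasDerivAt_pathT (x v : Fin n → ℝ) (t : ℝ) :
    HasDerivAt (fun s : ℝ => ((s, x, v) : Pt n)) (et n) t :=
  (hasDerivAt_id t).prodMk (hasDerivAt_const t (x, v))

lemma hasDerivAt_pathX (t : ℝ) (x v : Fin n → ℝ) (i : Fin n) (y : ℝ) :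
    HasDerivAt (fun s : ℝ => ((t, Function.update x i s, v) : Pt n)) (ex i) y :=
  (hasDerivAt_const y t).prodMk ((hasDerivAt_update x i y).prodMk (hasDerivAt_const y v))

lemma hasDerivAt_pathV (t : ℝ) (x v : Fin n → ℝ) (i : Fin n) (y : ℝ) :
    HasDerivAt (fun s : ℝ => ((t, x, Function.update v i s) : Pt n)) (ev i) y :=
  (hasDerivAt_const y t).prodMk ((hasDerivAt_const y x).prodMk (hasDerivAt_update v i y))


lemma Dt_eq {u : ℝ → (Fin n → ℝ) → (Fin n → ℝ) → ℝ} {G : Pt n → ℝ}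
    (hG : ContDiff ℝ (⊤ : ℕ∞) G) (h : ∀ t x v, u t x v = G (t, x, v))
    (t : ℝ) (x v : Fin n → ℝ) :
    deriv (fun s => u s x v) t = Dd (et n) G (t, x, v) := by
  have h1 : (fun s => u s x v) = fun s => G (s, x, v) := funext fun s => h s x v
  rw [h1]
  exact ((diffAt hG (t, x, v)).hasFDerivAt.comp_hasDerivAt t (hasDerivAt_pathT x v t)).deriv

lemma Dx_eq {u : ℝ → (Fin n → ℝ) → (Fin n → ℝ) → ℝ} {G : Pt n → ℝ}
    (hG : ContDiff ℝ (⊤ : ℕ∞) G) (h : ∀ t x v, u t x v = G (t, x, v))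
    (i : Fin n) (t : ℝ) (x v : Fin n → ℝ) :
    deriv (fun s => u t (Function.update x i s) v) (x i) = Dd (ex i) G (t, x, v) := by
  have h1 : (fun s => u t (Function.update x i s) v)
      = fun s => G (t, Function.update x i s, v) := funext fun s => h _ _ _
  rw [h1]
  have hd : HasFDerivAt G (fderiv ℝ G (t, x, v)) (t, Function.update x i (x i), v) := by
    rw [Function.update_eq_self]
    exact (diffAt hG _).hasFDerivAt
  exact (hd.comp_hasDerivAt (x i) (hasDerivAt_pathX t x v i (x i))).deriv

lemma Dv_eq {u : ℝ → (Fin n → ℝ) → (Fin n → ℝ) → ℝ} {G : Pt n → ℝ}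
    (hG : ContDiff ℝ (⊤ : ℕ∞) G) (h : ∀ t x v, u t x v = G (t, x, v))
    (i : Fin n) (t : ℝ) (x v : Fin n → ℝ) :
    deriv (fun s => u t x (Function.update v i s)) (v i) = Dd (ev i) G (t, x, v) := by
  have h1 : (fun s => u t x (Function.update v i s))
      = fun s => G (t, x, Function.update v i s) := funext fun s => h _ _ _
  rw [h1]
  have hd : HasFDerivAt G (fderiv ℝ G (t, x, v)) (t, x, Function.update v i (v i)) := by
    rw [Function.update_eq_self]
    exact (diffAt hG _).hasFDerivAt
  exact (hd.comp_hasDerivAt (v i) (hasDerivAt_pathV t x v i (v i))).deriv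

lemma Dd_sum {ι : Type*} (s : Finset ι) {f : ι → Pt n → ℝ}
    (hf : ∀ i ∈ s, ContDiff ℝ (⊤ : ℕ∞) (f i)) (a z) :
    Dd a (fun z => ∑ i ∈ s, f i z) z = ∑ i ∈ s, Dd a (f i) z := by
  unfold Dd
  rw [fderiv_fun_sum fun i hi => diffAt (hf i hi) z]
  simp

lemma Dd_sub {f g : Pt n → ℝ} (hf : ContDiff ℝ (⊤ : ℕ∞) f) (hg : ContDiff ℝ (⊤ : ℕ∞) g) (a z) :
    Dd a (fun z => f z - g z) z = Dd a f z - Dd a g z := by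
  unfold Dd
  rw [fderiv_fun_sub (diffAt hf z) (diffAt hg z)]
  simp

lemma Dd_add {f g : Pt n → ℝ} (hf : ContDiff ℝ (⊤ : ℕ∞) f) (hg : ContDiff ℝ (⊤ : ℕ∞) g) (a z) :
    Dd a (fun z => f z + g z) z = Dd a f z + Dd a g z := by
  unfold Dd
  rw [fderiv_fun_add (diffAt hf z) (diffAt hg z)]
  simp

lemma Dd_mul {f g : Pt n → ℝ} (hf : ContDiff ℝ (⊤ : ℕ∞) f) (hg : ContDiff ℝ (⊤ : ℕ∞) g) (a z) :
    Dd a (fun z => f z * g z) z = f z * Dd a g z + g z * Dd a f z := by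
  unfold Dd
  rw [fderiv_fun_mul (diffAt hf z) (diffAt hg z)]
  simp

lemma Dd_const_mul {g : Pt n → ℝ} (hg : ContDiff ℝ (⊤ : ℕ∞) g) (c : ℝ) (a z) :
    Dd a (fun z => c * g z) z = c * Dd a g z := by
  unfold Dd
  rw [fderiv_const_mul (diffAt hg z) c]
  simp

lemma Dd_comp {β : ℝ → ℝ} {F : Pt n → ℝ} (hβ : ContDiff ℝ (⊤ : ℕ∞) β) (hF : ContDiff ℝ (⊤ : ℕ∞) F) (a z) :
    Dd a (fun z => β (F z)) z = deriv β (F z) * Dd a F z := by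
  have h1 : HasDerivAt β (deriv β (F z)) (F z) :=
    ((hβ.differentiable (by simp)).differentiableAt).hasDerivAt
  have h2 : HasFDerivAt (fun z => β (F z)) (deriv β (F z) • fderiv ℝ F z) z :=
    h1.comp_hasFDerivAt z (diffAt hF z).hasFDerivAt
  unfold Dd
  rw [h2.fderiv]
  simp

def cproj (j : Fin n) : Pt n →L[ℝ] ℝ :=
  (ContinuousLinearMap.proj j).comp
    ((ContinuousLinearMap.snd ℝ (Fin n → ℝ) (Fin n → ℝ)).comp
      (ContinuousLinearMap.snd ℝ ℝ ((Fin n → ℝ) × (Fin n → ℝ))))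

lemma contDiff_cj (j : Fin n) : ContDiff ℝ (⊤ : ℕ∞) (fun z : Pt n => z.2.2 j) :=
  (cproj j).contDiff

lemma Dd_cj (j : Fin n) (a z : Pt n) : Dd a (fun z : Pt n => z.2.2 j) z = a.2.2 j := by
  unfold Dd
  have : fderiv ℝ (fun z : Pt n => z.2.2 j) z = cproj j := (cproj j).fderiv
  rw [this]
  rfl

lemma Dd_comm {G : Pt n → ℝ} (hG : ContDiff ℝ (⊤ : ℕ∞) G) (a b z) :
    Dd a (Dd b G) z = Dd b (Dd a G) z := by
  have hd : DifferentiableAt ℝ (fderiv ℝ G) z :=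
    ((hG.fderiv_right (m := 1) (WithTop.coe_le_coe.mpr le_top)).differentiable one_ne_zero).differentiableAt
  have key : ∀ c : Pt n, fderiv ℝ (fun z => fderiv ℝ G z c) z =
      (ContinuousLinearMap.apply ℝ ℝ c).comp (fderiv ℝ (fderiv ℝ G) z) :=
    fun c => (((ContinuousLinearMap.apply ℝ ℝ c).hasFDerivAt).comp z hd.hasFDerivAt).fderiv
  have hsymm := hG.contDiffAt.isSymmSndFDerivAt (x := z) (by rw [minSmoothness_of_isRCLikeNormedField]; exact WithTop.coe_le_coe.mpr le_top)
  show fderiv ℝ (fun z => fderiv ℝ G z b) z a = fderiv ℝ (fun z => fderiv ℝ G z a) z b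
  rw [key b, key a]
  simpa using hsymm a b


def KolD (G : Pt n → ℝ) (z : Pt n) : ℝ :=
  (∑ i, Dd (ev i) (Dd (ev i) G) z) - Dd (et n) G z - ∑ i, z.2.2 i * Dd (ex i) G z

/-- Commutation of `KolD` with spatial directional derivatives. -/
lemma Dd_ex_KolD {F : Pt n → ℝ} (hF : ContDiff ℝ (⊤ : ℕ∞) F) (i : Fin n) (z : Pt n) :
    Dd (ex i) (KolD F) z = KolD (Dd (ex i) F) z := by
  have hA : ContDiff ℝ (⊤ : ℕ∞) (fun z : Pt n => ∑ j, Dd (ev j) (Dd (ev j) F) z) :=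
    ContDiff.sum fun j _ => contDiff_Dd (contDiff_Dd hF _) _
  have hB : ContDiff ℝ (⊤ : ℕ∞) (Dd (et n) F) := contDiff_Dd hF _
  have hC : ContDiff ℝ (⊤ : ℕ∞) (fun z : Pt n => ∑ j, z.2.2 j * Dd (ex j) F z) :=
    ContDiff.sum fun j _ => (contDiff_cj j).mul (contDiff_Dd hF _)
  have hKol : KolD F = fun z =>
      ((fun z => ∑ j, Dd (ev j) (Dd (ev j) F) z) z - Dd (et n) F z)
        - (fun z => ∑ j, z.2.2 j * Dd (ex j) F z) z := rfl
  rw [hKol, Dd_sub (ContDiff.sub hA hB) hC, Dd_sub hA hB]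
  have e1 : Dd (ex i) (fun z => ∑ j, Dd (ev j) (Dd (ev j) F) z) z
      = ∑ j, Dd (ev j) (Dd (ev j) (Dd (ex i) F)) z := by
    rw [Dd_sum Finset.univ (fun j _ => contDiff_Dd (contDiff_Dd hF _) _)]
    refine Finset.sum_congr rfl fun j _ => ?_
    rw [Dd_comm (contDiff_Dd hF (ev j)) (ex i) (ev j) z]
    congr 1
    exact funext fun z => Dd_comm hF (ex i) (ev j) z
  have e2 : Dd (ex i) (Dd (et n) F) z = Dd (et n) (Dd (ex i) F) z :=
    Dd_comm hF (ex i) (et n) z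
  have e3 : Dd (ex i) (fun z => ∑ j, z.2.2 j * Dd (ex j) F z) z
      = ∑ j, z.2.2 j * Dd (ex j) (Dd (ex i) F) z := by
    rw [Dd_sum Finset.univ (fun j _ => (contDiff_cj j).mul (contDiff_Dd hF _))]
    refine Finset.sum_congr rfl fun j _ => ?_
    rw [Dd_mul (contDiff_cj j) (contDiff_Dd hF _), Dd_cj]
    have : (ex (n := n) i).2.2 j = 0 := rfl
    rw [this, Dd_comm hF (ex i) (ex j) z]
    ring
  rw [e1, e2, e3]
  rfl


lemma algebra2 {N : ℕ} (Wp P : Fin N → ℝ) (B : Fin N → Fin N → ℝ) (b : ℝ) :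
    (∑ i, 2 * (Wp i * (b * Wp i + P i))) + (∑ i, ∑ j, 2 * (B i j * B i j))
      = 2 * (b * (∑ i, Wp i * Wp i) + (∑ i, ∑ j, B i j * B i j) + ∑ i, Wp i * P i) := by
  have h : ∀ i, 2 * (Wp i * (b * Wp i + P i)) = 2 * (b * (Wp i * Wp i)) + 2 * (Wp i * P i) :=
    fun i => by ring
  rw [Finset.sum_congr rfl (fun i _ => h i), Finset.sum_add_distrib]
  have h2 : ∑ i, 2 * (b * (Wp i * Wp i)) = 2 * (b * ∑ i, Wp i * Wp i) := by
    rw [Finset.mul_sum, Finset.mul_sum]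
  have h3 : ∑ i, 2 * (Wp i * P i) = 2 * ∑ i, Wp i * P i := by rw [Finset.mul_sum]
  have h4 : ∑ i, ∑ j, 2 * (B i j * B i j) = 2 * ∑ i, ∑ j, B i j * B i j := by
    rw [Finset.mul_sum]
    exact Finset.sum_congr rfl fun i _ => by rw [Finset.mul_sum]
  rw [h2, h3, h4]
  ring

lemma algebra1 {N : ℕ} (A B X : Fin N → Fin N → ℝ) (W T vv : Fin N → ℝ) :
    (∑ j, ∑ i, 2 * (W i * A i j + B i j * B i j)) - (∑ i, 2 * (W i * T i))
      - (∑ j, vv j * ∑ i, 2 * (W i * X i j))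
    = (∑ i, 2 * (W i * ((∑ j, A i j) - T i - ∑ j, vv j * X i j)))
      + ∑ i, ∑ j, 2 * (B i j * B i j) := by
  have e1 : (∑ j, ∑ i, 2 * (W i * A i j + B i j * B i j))
      = (∑ i, ∑ j, 2 * (W i * A i j)) + ∑ i, ∑ j, 2 * (B i j * B i j) := by
    rw [Finset.sum_comm, ← Finset.sum_add_distrib]
    refine Finset.sum_congr rfl fun i _ => ?_
    rw [← Finset.sum_add_distrib]
    exact Finset.sum_congr rfl fun j _ => by ring
  have e3 : (∑ j, vv j * ∑ i, 2 * (W i * X i j))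
      = ∑ i, ∑ j, vv j * (2 * (W i * X i j)) := by
    simp_rw [Finset.mul_sum]
    exact Finset.sum_comm
  have e2 : (∑ i, 2 * (W i * ((∑ j, A i j) - T i - ∑ j, vv j * X i j)))
      = (∑ i, ∑ j, 2 * (W i * A i j)) - (∑ i, 2 * (W i * T i))
        - ∑ i, ∑ j, vv j * (2 * (W i * X i j)) := by
    rw [← Finset.sum_sub_distrib, ← Finset.sum_sub_distrib]
    refine Finset.sum_congr rfl fun i _ => ?_
    have h1 : (2:ℝ) * (W i * ∑ j, A i j) = ∑ j, 2 * (W i * A i j) := by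
      rw [Finset.mul_sum, Finset.mul_sum]
    have h2 : (2:ℝ) * (W i * ∑ j, vv j * X i j) = ∑ j, vv j * (2 * (W i * X i j)) := by
      rw [Finset.mul_sum, Finset.mul_sum]
      exact Finset.sum_congr rfl fun j _ => by ring
    rw [← h1, ← h2]
    ring
  rw [e1, e3, e2]
  ring

lemma KolD_sumsq {w : Fin n → Pt n → ℝ} (hw : ∀ i, ContDiff ℝ (⊤ : ℕ∞) (w i)) (z : Pt n) :
    KolD (fun z => ∑ i, w i z * w i z) z
      = (∑ i, 2 * (w i z * KolD (w i) z))
        + ∑ i, ∑ j, 2 * (Dd (ev j) (w i) z * Dd (ev j) (w i) z) := by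
  have hDdS : ∀ (a : Pt n) (z : Pt n), Dd a (fun z => ∑ i, w i z * w i z) z
      = ∑ i, 2 * (w i z * Dd a (w i) z) := by
    intro a z
    rw [Dd_sum Finset.univ (fun i _ => (hw i).mul (hw i))]
    refine Finset.sum_congr rfl fun i _ => ?_
    rw [Dd_mul (hw i) (hw i)]
    ring
  have hterm1 : ∀ j, Dd (ev j) (Dd (ev j) (fun z => ∑ i, w i z * w i z)) z
      = ∑ i, 2 * (w i z * Dd (ev j) (Dd (ev j) (w i)) z
          + Dd (ev j) (w i) z * Dd (ev j) (w i) z) := by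
    intro j
    have hfun : Dd (ev j) (fun z => ∑ i, w i z * w i z)
        = fun z => ∑ i, 2 * (w i z * Dd (ev j) (w i) z) := funext fun z => hDdS _ z
    rw [hfun, Dd_sum Finset.univ
      (fun i _ => contDiff_const.mul ((hw i).mul (contDiff_Dd (hw i) _)))]
    refine Finset.sum_congr rfl fun i _ => ?_
    rw [Dd_const_mul ((hw i).mul (contDiff_Dd (hw i) _)),
      Dd_mul (hw i) (contDiff_Dd (hw i) _)]
  have t1 : (∑ j, Dd (ev j) (Dd (ev j) (fun z => ∑ i, w i z * w i z)) z)
      = ∑ j, ∑ i, 2 * (w i z * Dd (ev j) (Dd (ev j) (w i)) z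
          + Dd (ev j) (w i) z * Dd (ev j) (w i) z) :=
    Finset.sum_congr rfl fun j _ => hterm1 j
  have t3 : (∑ j, z.2.2 j * Dd (ex j) (fun z => ∑ i, w i z * w i z) z)
      = ∑ j, z.2.2 j * ∑ i, 2 * (w i z * Dd (ex j) (w i) z) :=
    Finset.sum_congr rfl fun j _ => by rw [hDdS (ex j) z]
  unfold KolD
  rw [hDdS (et n) z, t1, t3]
  exact algebra1 (fun i j => Dd (ev j) (Dd (ev j) (w i)) z)
    (fun i j => Dd (ev j) (w i) z) (fun i j => Dd (ex j) (w i) z)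
    (fun i => w i z) (fun i => Dd (et n) (w i) z) (fun j => z.2.2 j)


lemma Kol_eq {u : ℝ → (Fin n → ℝ) → (Fin n → ℝ) → ℝ} {G : Pt n → ℝ}
    (hG : ContDiff ℝ (⊤ : ℕ∞) G) (h : ∀ t x v, u t x v = G (t, x, v))
    (t : ℝ) (x v : Fin n → ℝ) :
    Kol u t x v = KolD G (t, x, v) := by
  show (∑ i, Dv i (Dv i u) t x v) - Dt u t x v - (∑ i, v i * Dx i u t x v) = _
  unfold KolD
  congr 1
  congr 1
  · refine Finset.sum_congr rfl fun i _ => ?_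
    have hin : ∀ t x v, Dv i u t x v = Dd (ev i) G (t, x, v) :=
      fun t x v => Dv_eq hG h i t x v
    exact Dv_eq (contDiff_Dd hG _) hin i t x v
  · exact Dt_eq hG h t x v
  · exact Finset.sum_congr rfl fun i _ => by rw [show Dx i u t x v = _ from Dx_eq hG h i t x v]

end KolAux

/-- If `𝓛 u = β(u) + φ` with `β` smooth increasing, then
`𝓛(|∇_x u|²) = 2(β′(u)|∇_x u|² + |∇_v∇_x u|² + ∇_x u · ∇_x φ)`. -/
theorem Kol_gradx_sq_penalized (n : ℕ)
    (u φ : ℝ → (Fin n → ℝ) → (Fin n → ℝ) → ℝ) (β : ℝ → ℝ)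
    (hu : ContDiff ℝ (⊤ : ℕ∞) (fun z : Pt n => u z.1 z.2.1 z.2.2))
    (hφ : ContDiff ℝ (⊤ : ℕ∞) (fun z : Pt n => φ z.1 z.2.1 z.2.2))
    (hβ : ContDiff ℝ (⊤ : ℕ∞) β) (hβ' : ∀ s, 0 ≤ deriv β s)
    (heq : ∀ (t : ℝ) (x v : Fin n → ℝ), Kol u t x v = β (u t x v) + φ t x v) :
    ∀ (t : ℝ) (x v : Fin n → ℝ),
      Kol (fun t x v => ∑ i, (Dx i u t x v) ^ 2) t x v =
        2 * (deriv β (u t x v) * (∑ i, (Dx i u t x v) ^ 2) +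
          (∑ i, ∑ j, (Dv j (Dx i u) t x v) ^ 2) +
          ∑ i, Dx i u t x v * Dx i φ t x v) := by
  intro t x v
  classical
  set F : Pt n → ℝ := fun z => u z.1 z.2.1 z.2.2 with hFdef
  set Φ : Pt n → ℝ := fun z => φ z.1 z.2.1 z.2.2 with hΦdef
  have hF : ContDiff ℝ (⊤ : ℕ∞) F := hu
  have hΦc : ContDiff ℝ (⊤ : ℕ∞) Φ := hφ
  have hu' : ∀ t x v, u t x v = F (t, x, v) := fun _ _ _ => rfl
  have hφ' : ∀ t x v, φ t x v = Φ (t, x, v) := fun _ _ _ => rfl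
  have hDx : ∀ i (t' : ℝ) (x' v' : Fin n → ℝ),
      Dx i u t' x' v' = KolAux.Dd (KolAux.ex i) F (t', x', v') :=
    fun i t' x' v' => KolAux.Dx_eq hF hu' i t' x' v'
  have hS : ContDiff ℝ (⊤ : ℕ∞) (fun z : Pt n =>
      ∑ i, KolAux.Dd (KolAux.ex i) F z * KolAux.Dd (KolAux.ex i) F z) :=
    ContDiff.sum fun i _ => (KolAux.contDiff_Dd hF _).mul (KolAux.contDiff_Dd hF _)
  have hsum : ∀ (t' : ℝ) (x' v' : Fin n → ℝ), (∑ i, (Dx i u t' x' v') ^ 2)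
      = (fun z : Pt n => ∑ i, KolAux.Dd (KolAux.ex i) F z * KolAux.Dd (KolAux.ex i) F z)
          (t', x', v') := by
    intro t' x' v'
    exact Finset.sum_congr rfl fun i _ => by rw [hDx i, pow_two]
  have hKolF : ∀ z : Pt n, KolAux.KolD F z = β (F z) + Φ z := by
    intro z
    have h0 := heq z.1 z.2.1 z.2.2
    rw [KolAux.Kol_eq hF hu' z.1 z.2.1 z.2.2] at h0
    exact h0
  have hKw : ∀ i (z : Pt n), KolAux.KolD (KolAux.Dd (KolAux.ex i) F) z
      = deriv β (F z) * KolAux.Dd (KolAux.ex i) F z + KolAux.Dd (KolAux.ex i) Φ z := by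
    intro i z
    rw [← KolAux.Dd_ex_KolD hF i z]
    have hfun : KolAux.KolD F = fun z => β (F z) + Φ z := funext hKolF
    rw [hfun, KolAux.Dd_add (f := fun z => β (F z)) (hβ.comp hF) hΦc, KolAux.Dd_comp hβ hF]
  have hDvDx : ∀ i j, Dv j (Dx i u) t x v
      = KolAux.Dd (KolAux.ev j) (KolAux.Dd (KolAux.ex i) F) (t, x, v) :=
    fun i j => KolAux.Dv_eq (KolAux.contDiff_Dd hF _) (hDx i) j t x v
  have hDxφ : ∀ i, Dx i φ t x v = KolAux.Dd (KolAux.ex i) Φ (t, x, v) :=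
    fun i => KolAux.Dx_eq hΦc hφ' i t x v
  rw [KolAux.Kol_eq hS hsum t x v,
    KolAux.KolD_sumsq (w := fun i => KolAux.Dd (KolAux.ex i) F)
      (fun i => KolAux.contDiff_Dd hF _) (t, x, v)]
  have hR1 : (∑ i, (Dx i u t x v) ^ 2)
      = ∑ i, KolAux.Dd (KolAux.ex i) F (t, x, v) * KolAux.Dd (KolAux.ex i) F (t, x, v) :=
    hsum t x v
  have hR2 : (∑ i, ∑ j, (Dv j (Dx i u) t x v) ^ 2)
      = ∑ i, ∑ j, KolAux.Dd (KolAux.ev j) (KolAux.Dd (KolAux.ex i) F) (t, x, v)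
          * KolAux.Dd (KolAux.ev j) (KolAux.Dd (KolAux.ex i) F) (t, x, v) :=
    Finset.sum_congr rfl fun i _ => Finset.sum_congr rfl fun j _ => by
      rw [hDvDx i j, pow_two]
  have hR3 : (∑ i, Dx i u t x v * Dx i φ t x v)
      = ∑ i, KolAux.Dd (KolAux.ex i) F (t, x, v) * KolAux.Dd (KolAux.ex i) Φ (t, x, v) :=
    Finset.sum_congr rfl fun i _ => by rw [hDx i, hDxφ i]
  have hub : u t x v = F (t, x, v) := rfl
  rw [hR1, hR2, hR3, hub]
  have hL : (∑ i, 2 * (KolAux.Dd (KolAux.ex i) F (t, x, v)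
        * KolAux.KolD (KolAux.Dd (KolAux.ex i) F) (t, x, v)))
      = ∑ i, 2 * (KolAux.Dd (KolAux.ex i) F (t, x, v)
          * (deriv β (F (t, x, v)) * KolAux.Dd (KolAux.ex i) F (t, x, v)
            + KolAux.Dd (KolAux.ex i) Φ (t, x, v))) :=
    Finset.sum_congr rfl fun i _ => by rw [hKw i (t, x, v)]
  rw [hL]
  exact KolAux.algebra2 (fun i => KolAux.Dd (KolAux.ex i) F (t, x, v))
    (fun i => KolAux.Dd (KolAux.ex i) Φ (t, x, v))
    (fun i j => KolAux.Dd (KolAux.ev j) (KolAux.Dd (KolAux.ex i) F) (t, x, v))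
    (deriv β (F (t, x, v)))
end
end

section
/- Fix δ, θ ∈ (0,1) and let c < δ/(2−δ). If v = (v′, v_n) ∈ ℝⁿ satisfies v_n > θ|v| and v_n > 0, then for every w ∈ ℝⁿ with |w| < c·v_n, one has ((v−w)·e_n)/|v−w| > (1−δ)θ; equivalently, v − w lies in the cone {u : u·e_n > (1−δ)θ|u|}. -/
noncomputable section

lemma euclNorm_nonneg {n : ℕ} (x : Fin n → ℝ) : 0 ≤ euclNorm x := Real.sqrt_nonneg _

lemma euclNorm_eq_norm {n : ℕ} (x : Fin n → ℝ) :
    euclNorm x = ‖(WithLp.equiv 2 (Fin n → ℝ)).symm x‖ := by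
  rw [EuclideanSpace.norm_eq]
  simp [euclNorm, sq_abs]

lemma euclNorm_sub_le {n : ℕ} (x y : Fin n → ℝ) :
    euclNorm (x - y) ≤ euclNorm x + euclNorm y := by
  simp only [euclNorm_eq_norm]
  exact norm_sub_le _ _

lemma coord_le_euclNorm {n : ℕ} (x : Fin n → ℝ) (i : Fin n) : x i ≤ euclNorm x := by
  have h1 : x i ^ 2 ≤ ∑ j, x j ^ 2 :=
    Finset.single_le_sum (fun j _ => sq_nonneg (x j)) (Finset.mem_univ i)
  calc x i ≤ |x i| := le_abs_self _
    _ = Real.sqrt (x i ^ 2) := (Real.sqrt_sq_eq_abs _).symm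
    _ ≤ euclNorm x := Real.sqrt_le_sqrt h1

/-- Geometric cone lemma: if `v_n > θ|v|`, `v_n > 0`, `c < δ/(2−δ)` and `|w| < c v_n`,
then `v − w` lies in the cone `{u : u·e_n > (1−δ)θ|u|}`. -/
theorem cone_lemma (n : ℕ) (δ θ c : ℝ)
    (hδ : δ ∈ Set.Ioo (0 : ℝ) 1) (hθ : θ ∈ Set.Ioo (0 : ℝ) 1)
    (hc : c < δ / (2 - δ)) (v w : Fin (n + 1) → ℝ)
    (hv : θ * euclNorm v < v (Fin.last n)) (hvn : 0 < v (Fin.last n))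
    (hw : euclNorm w < c * v (Fin.last n)) :
    (1 - δ) * θ * euclNorm (v - w) < (v - w) (Fin.last n) := by
  obtain ⟨hδ0, hδ1⟩ := hδ
  obtain ⟨hθ0, hθ1⟩ := hθ
  set vn := v (Fin.last n) with hvn'
  have hNw0 : (0:ℝ) ≤ euclNorm w := euclNorm_nonneg w
  have hc0 : 0 < c := by
    by_contra h
    push_neg at h
    nlinarith
  have hc2 : c * (2 - δ) < δ := by
    have h2 : (0:ℝ) < 2 - δ := by linarith
    exact (lt_div_iff₀ h2).mp hc
  have htri : euclNorm (v - w) ≤ euclNorm v + euclNorm w := euclNorm_sub_le v w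
  have hwn : w (Fin.last n) ≤ euclNorm w := coord_le_euclNorm w _
  have hsub : (v - w) (Fin.last n) = vn - w (Fin.last n) := rfl
  rw [hsub]
  have hNv0 : (0:ℝ) ≤ euclNorm v := euclNorm_nonneg v
  have h1δ : (0:ℝ) < 1 - δ := by linarith
  nlinarith [mul_le_mul_of_nonneg_left htri (mul_nonneg h1δ.le hθ0.le),
    mul_lt_mul_of_pos_left hv h1δ,
    mul_lt_mul_of_pos_left hw (mul_pos h1δ hθ0),
    mul_lt_mul_of_pos_right hc2 hvn,
    mul_nonneg (mul_nonneg h1δ.le (mul_pos hc0 hvn).le) (by linarith : (0:ℝ) ≤ 1 - θ)]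
end
end
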